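/- arXiv:1110.5447 — 4 statements merged into one kernel-verified Lean document; each statement's English description precedes it below -/
import Mathlib

section
/- The expected bias of the Good-Turing estimator of the missing mass of interesting items satisfies -1/n ≤ E[R_n - Û_n/n] ≤ 0, where R_n = ∑_{x∈A} P(x)·1{x unseen in X_1,…,X_n} and U_n is the number of x∈A appearing exactly once among X_1,…,X_n. -/
/-!
Fix an item `x ∈ A` and write `p = P(x)`. The item is unseen with probability `(1 - p)^n` and seen
exactly once with probability `n p (1 - p)^(n-1)`, so its contribution to the bias
`R_n - U_n / n` has expectation `p (1 - p)^n - p (1 - p)^(n-1) = -p² (1 - p)^(n-1)`.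
This lies in `[-p / n, 0]` because `n p (1 - p)^(n-1)`, a binomial probability, is at most `1`.
Each contribution has L¹-norm at most `2p`, so the expectation commutes with the sum over items,
and summing the bounds over `x` (using `∑ p(x) = 1`) gives the claim.
-/

open scoped Classical
open MeasureTheory

lemma nat_mul_mul_one_sub_pow_le_one {p : ℝ} (hp0 : 0 ≤ p) (hp1 : p ≤ 1) (n : ℕ) :
    n * p * (1 - p) ^ (n - 1) ≤ 1 := by
  rcases n with _ | n
  · simp
  calc ((n + 1 : ℕ) : ℝ) * p * (1 - p) ^ (n + 1 - 1)
      = p ^ 1 * (1 - p) ^ (n + 1 - 1) * (n + 1).choose 1 := by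
        simp only [Nat.cast_add, Nat.cast_one, add_tsub_cancel_right, pow_one,
          Nat.choose_one_right]
        ring
    _ ≤ ∑ m ∈ Finset.range (n + 2), p ^ m * (1 - p) ^ (n + 1 - m) * (n + 1).choose m :=
      Finset.single_le_sum (f := fun m => p ^ m * (1 - p) ^ (n + 1 - m) * ((n + 1).choose m : ℝ))
        (fun m _ => by have := sub_nonneg.2 hp1; positivity) (by simp)
    _ = 1 := by rw [← add_pow]; simp

lemma sq_mul_one_sub_pow_le_div {p : ℝ} (hp0 : 0 ≤ p) (hp1 : p ≤ 1) {n : ℕ} (hn : n ≠ 0) :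
    p ^ 2 * (1 - p) ^ (n - 1) ≤ p / n := by
  rw [le_div_iff₀ (by positivity)]
  calc p ^ 2 * (1 - p) ^ (n - 1) * n = p * (n * p * (1 - p) ^ (n - 1)) := by ring
    _ ≤ p * 1 := by gcongr; exact nat_mul_mul_one_sub_pow_le_one hp0 hp1 n
    _ = p := mul_one p

section ProductMeasure

variable {α : Type*} (n : ℕ) (s : Set α)

lemma setOf_forall_notMem_eq_pi :
    {X : Fin n → α | ∀ m, X m ∉ s} = Set.univ.pi fun _ => sᶜ := by
  ext X; simp

lemma setOf_existsUnique_mem_eq_iUnion :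
    {X : Fin n → α | ∃! m, X m ∈ s} =
      ⋃ m, Set.univ.pi (Function.update (fun _ => sᶜ) m s) := by
  ext X
  simp only [Set.mem_ofPred_eq, Set.mem_iUnion, Set.mem_univ_pi]
  refine exists_congr fun m => ⟨fun ⟨hm, huniq⟩ k => ?_, fun h => ⟨?_, fun k hk => ?_⟩⟩
  · rcases eq_or_ne k m with rfl | hkm
    · simpa using hm
    · simpa [hkm] using mt (huniq k) hkm
  · simpa using h m
  · by_contra hkm
    simpa [hkm, hk] using h k

lemma pairwise_disjoint_pi_update :
    Pairwise (Function.onFun Disjoint fun m : Fin n =>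
      Set.univ.pi (Function.update (fun _ => sᶜ) m s)) := by
  intro m k hmk
  refine Set.disjoint_left.2 fun X hm hk => ?_
  have h1 := Set.mem_univ_pi.1 hm m
  have h2 := Set.mem_univ_pi.1 hk m
  simp_all

variable {s} [MeasurableSpace α]

lemma measurableSet_setOf_forall_notMem (hs : MeasurableSet s) :
    MeasurableSet {X : Fin n → α | ∀ m, X m ∉ s} := by
  rw [setOf_forall_notMem_eq_pi]
  exact .univ_pi fun _ => hs.compl

lemma measurableSet_pi_update (hs : MeasurableSet s) (m : Fin n) :
    MeasurableSet (Set.univ.pi (Function.update (fun _ => sᶜ) m s)) :=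
  .univ_pi fun k => by rcases eq_or_ne k m with rfl | hkm <;> simp [*, hs.compl]

lemma measurableSet_setOf_existsUnique_mem (hs : MeasurableSet s) :
    MeasurableSet {X : Fin n → α | ∃! m, X m ∈ s} := by
  rw [setOf_existsUnique_mem_eq_iUnion]
  exact .iUnion (measurableSet_pi_update n hs)

variable (ν : Measure α) [SigmaFinite ν]

lemma measure_pi_setOf_forall_notMem :
    Measure.pi (fun _ : Fin n => ν) {X | ∀ m, X m ∉ s} = ν sᶜ ^ n := by
  simp [setOf_forall_notMem_eq_pi, Measure.pi_pi]

lemma measure_pi_setOf_existsUnique_mem (hs : MeasurableSet s) :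
    Measure.pi (fun _ : Fin n => ν) {X | ∃! m, X m ∈ s} = n * (ν s * ν sᶜ ^ (n - 1)) := by
  rw [setOf_existsUnique_mem_eq_iUnion, measure_iUnion (pairwise_disjoint_pi_update n s)
    (measurableSet_pi_update n hs), tsum_fintype]
  have hprod (m : Fin n) :
      ∏ k, ν (Function.update (fun _ => sᶜ) m s k) = ν s * ν sᶜ ^ (n - 1) := by
    simp_rw [Function.apply_update (fun _ => ν), Finset.prod_update_of_mem (Finset.mem_univ m),
      Finset.prod_const, Finset.card_univ_sdiff]
    simp
  simp [Measure.pi_pi, hprod]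

end ProductMeasure

section PMF

variable {Ω : Type*} (P : PMF Ω)

lemma PMF.hasSum_toReal : HasSum (fun x => (P x).toReal) 1 := by
  have h := ENNReal.hasSum_toReal (f := P) P.tsum_coe_ne_top
  rwa [← ENNReal.tsum_toReal_eq P.apply_ne_top, P.tsum_coe, ENNReal.toReal_one] at h

lemma PMF.toReal_apply_le_one (x : Ω) : (P x).toReal ≤ 1 :=
  ENNReal.toReal_le_of_le_ofReal zero_le_one (by simpa using P.coe_le_one x)

variable [MeasurableSpace Ω] [MeasurableSingletonClass Ω] {n : ℕ}

lemma PMF.toMeasure_real_singleton (x : Ω) : P.toMeasure.real {x} = (P x).toReal := by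
  rw [measureReal_def, P.toMeasure_apply_singleton x (measurableSet_singleton x)]

lemma PMF.toMeasure_real_compl_singleton (x : Ω) :
    P.toMeasure.real {x}ᶜ = 1 - (P x).toReal := by
  rw [probReal_compl_eq_one_sub (measurableSet_singleton x), P.toMeasure_real_singleton]

lemma measureReal_pi_setOf_forall_ne (x : Ω) :
    (Measure.pi fun _ : Fin n => P.toMeasure).real {X | ∀ m, X m ≠ x} =
      (1 - (P x).toReal) ^ n := by
  change (Measure.pi _).real {X | ∀ m, X m ∉ ({x} : Set Ω)} = _
  rw [measureReal_def, measure_pi_setOf_forall_notMem n (s := {x}), ENNReal.toReal_pow,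
    ← measureReal_def, P.toMeasure_real_compl_singleton]

lemma measureReal_pi_setOf_existsUnique_eq (x : Ω) :
    (Measure.pi fun _ : Fin n => P.toMeasure).real {X | ∃! m, X m = x} =
      n * ((P x).toReal * (1 - (P x).toReal) ^ (n - 1)) := by
  change (Measure.pi _).real {X | ∃! m, X m ∈ ({x} : Set Ω)} = _
  rw [measureReal_def, measure_pi_setOf_existsUnique_mem n _ (measurableSet_singleton x),
    ENNReal.toReal_mul, ENNReal.toReal_mul, ENNReal.toReal_pow, ← measureReal_def,
    ← measureReal_def, P.toMeasure_real_compl_singleton, P.toMeasure_real_singleton]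
  simp

end PMF

section BiasTerm

variable {Ω : Type*}

noncomputable def biasTerm (P : PMF Ω) (A : Set Ω) {n : ℕ} (x : Ω) (X : Fin n → Ω) : ℝ :=
  A.indicator (fun x => {X : Fin n → Ω | ∀ m, X m ≠ x}.indicator (fun _ => (P x).toReal) X
    - {X : Fin n → Ω | ∃! m, X m = x}.indicator (fun _ => (n : ℝ)⁻¹) X) x

variable (P : PMF Ω) {A : Set Ω} {n : ℕ}

lemma biasTerm_of_mem {x : Ω} (hx : x ∈ A) :
    biasTerm P A (n := n) x = fun X =>
      {X : Fin n → Ω | ∀ m, X m ≠ x}.indicator (fun _ => (P x).toReal) X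
        - {X : Fin n → Ω | ∃! m, X m = x}.indicator (fun _ => (n : ℝ)⁻¹) X :=
  funext fun _ => Set.indicator_of_mem hx _

lemma biasTerm_of_notMem {x : Ω} (hx : x ∉ A) : biasTerm P A (n := n) x = 0 :=
  funext fun _ => Set.indicator_of_notMem hx _

variable (A) in
lemma tsum_biasTerm (X : Fin n → Ω) :
    ∑' x, biasTerm P A x X =
      (∑' x, if x ∈ A ∧ ∀ m, X m ≠ x then (P x).toReal else 0)
        - (∑' x, if x ∈ A ∧ ∃! m, X m = x then (1 : ℝ) else 0) / n := by
  have hunseen : Summable fun x => if x ∈ A ∧ ∀ m, X m ≠ x then (P x).toReal else 0 :=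
    .of_nonneg_of_le (fun x => by split_ifs <;> simp) (fun x => by split_ifs <;> simp)
      P.hasSum_toReal.summable
  have honce : Summable fun x => if x ∈ A ∧ ∃! m, X m = x then (1 : ℝ) else 0 :=
    summable_of_hasFiniteSupport <| (Set.finite_range X).subset fun x hx => by
      by_contra hX
      exact hx (if_neg fun ⟨_, m, hm, _⟩ => hX ⟨m, hm⟩)
  rw [← tsum_div_const, ← hunseen.tsum_sub (honce.div_const _)]
  congr 1
  funext x
  by_cases hx : x ∈ A <;> simp [biasTerm, Set.indicator_apply, hx, div_eq_mul_inv]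

variable [MeasurableSpace Ω] [MeasurableSingletonClass Ω]

lemma measurableSet_setOf_forall_ne (x : Ω) : MeasurableSet {X : Fin n → Ω | ∀ m, X m ≠ x} :=
  measurableSet_setOf_forall_notMem n (measurableSet_singleton x)

lemma measurableSet_setOf_existsUnique_eq (x : Ω) :
    MeasurableSet {X : Fin n → Ω | ∃! m, X m = x} :=
  measurableSet_setOf_existsUnique_mem n (measurableSet_singleton x)

lemma integrable_biasTerm (x : Ω) :
    Integrable (biasTerm P A x) (Measure.pi fun _ : Fin n => P.toMeasure) := by
  by_cases hx : x ∈ A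
  · rw [biasTerm_of_mem P hx]
    exact ((integrable_const _).indicator (measurableSet_setOf_forall_ne x)).sub
      ((integrable_const _).indicator (measurableSet_setOf_existsUnique_eq x))
  · rw [biasTerm_of_notMem P hx]
    exact integrable_zero _ _ _

lemma integral_biasTerm (hn : n ≠ 0) (x : Ω) :
    ∫ X, biasTerm P A x X ∂(Measure.pi fun _ : Fin n => P.toMeasure) =
      -A.indicator (fun x => (P x).toReal ^ 2 * (1 - (P x).toReal) ^ (n - 1)) x := by
  by_cases hx : x ∈ A
  · rw [biasTerm_of_mem P hx,
      integral_sub ((integrable_const _).indicator (measurableSet_setOf_forall_ne x))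
        ((integrable_const _).indicator (measurableSet_setOf_existsUnique_eq x)),
      integral_indicator_const _ (measurableSet_setOf_forall_ne x),
      integral_indicator_const _ (measurableSet_setOf_existsUnique_eq x),
      measureReal_pi_setOf_forall_ne, measureReal_pi_setOf_existsUnique_eq,
      Set.indicator_of_mem hx]
    obtain ⟨k, rfl⟩ := Nat.exists_eq_succ_of_ne_zero hn
    simp only [Nat.succ_eq_add_one, smul_eq_mul, Nat.cast_add, Nat.cast_one, add_tsub_cancel_right]
    field_simp
    ring
  · simp [biasTerm_of_notMem P hx, hx]

lemma integral_norm_biasTerm_le (x : Ω) :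
    ∫ X, ‖biasTerm P A x X‖ ∂(Measure.pi fun _ : Fin n => P.toMeasure) ≤ 2 * (P x).toReal := by
  have hp0 : 0 ≤ (P x).toReal := ENNReal.toReal_nonneg
  by_cases hx : x ∈ A
  swap
  · simp [biasTerm_of_notMem P hx, hp0]
  have hq0 : 0 ≤ 1 - (P x).toReal := sub_nonneg.2 (P.toReal_apply_le_one x)
  have hq1 : 1 - (P x).toReal ≤ 1 := sub_le_self _ hp0
  have hunseen := (integrable_const (μ := Measure.pi fun _ : Fin n => P.toMeasure)
    (P x).toReal).indicator (measurableSet_setOf_forall_ne x)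
  have honce := (integrable_const (μ := Measure.pi fun _ : Fin n => P.toMeasure)
    (n : ℝ)⁻¹).indicator (measurableSet_setOf_existsUnique_eq x)
  calc ∫ X, ‖biasTerm P A x X‖ ∂(Measure.pi fun _ : Fin n => P.toMeasure)
      ≤ ∫ X, {X : Fin n → Ω | ∀ m, X m ≠ x}.indicator (fun _ => (P x).toReal) X
          + {X : Fin n → Ω | ∃! m, X m = x}.indicator (fun _ => (n : ℝ)⁻¹) X
          ∂(Measure.pi fun _ : Fin n => P.toMeasure) := by
        refine integral_mono_of_nonneg (ae_of_all _ fun _ => norm_nonneg _) (hunseen.add honce)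
          (ae_of_all _ fun X => ?_)
        rw [biasTerm_of_mem P hx]
        refine (norm_sub_le _ _).trans_eq ?_
        simp [norm_indicator_eq_indicator_norm, abs_of_nonneg hp0]
    _ = (1 - (P x).toReal) ^ n * (P x).toReal
          + n * (n : ℝ)⁻¹ * ((P x).toReal * (1 - (P x).toReal) ^ (n - 1)) := by
        rw [integral_add hunseen honce,
          integral_indicator_const _ (measurableSet_setOf_forall_ne x),
          integral_indicator_const _ (measurableSet_setOf_existsUnique_eq x),
          measureReal_pi_setOf_forall_ne, measureReal_pi_setOf_existsUnique_eq, smul_eq_mul,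
          smul_eq_mul]
        ring
    _ ≤ (P x).toReal + (P x).toReal := by
        gcongr
        · exact mul_le_of_le_one_left hp0 (pow_le_one₀ hq0 hq1)
        · refine mul_le_of_le_one_left (by positivity)
            (mul_inv_le_one_of_le₀ le_rfl (Nat.cast_nonneg n)) |>.trans ?_
          exact mul_le_of_le_one_right hp0 (pow_le_one₀ hq0 hq1)
    _ = 2 * (P x).toReal := by ring

lemma hasSum_integral_biasTerm [Countable Ω] (hn : n ≠ 0) :
    HasSum (fun x => -A.indicator (fun x => (P x).toReal ^ 2 * (1 - (P x).toReal) ^ (n - 1)) x)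
      (∫ X, ∑' x, biasTerm P A x X ∂(Measure.pi fun _ : Fin n => P.toMeasure)) := by
  have h := hasSum_integral_of_summable_integral_norm (integrable_biasTerm P (A := A) (n := n))
    (.of_nonneg_of_le (fun x => integral_nonneg fun _ => norm_nonneg _)
      (integral_norm_biasTerm_le P) (P.hasSum_toReal.summable.mul_left 2))
  rwa [funext (integral_biasTerm P hn)] at h

end BiasTerm

/-- The expected bias of the Good-Turing estimator of the missing mass of interesting
items satisfies `-1/n ≤ E[R_n - U_n/n] ≤ 0`, where, for an i.i.d. sample
`X_1, …, X_n` from a distribution `P` on a countable set `Ω`,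
`R_n = ∑_{x ∈ A} P(x)·1{x unseen}` and `U_n = #{x ∈ A : x seen exactly once}`. -/
theorem goodTuring_bias_bounds
    {Ω : Type*} [Countable Ω] [MeasurableSpace Ω] [MeasurableSingletonClass Ω]
    (P : PMF Ω) (A : Set Ω) (n : ℕ) (hn : 1 ≤ n)
    (μ : Measure (Fin n → Ω)) (hμ : μ = Measure.pi fun _ => P.toMeasure)
    (R U : (Fin n → Ω) → ℝ)
    (hR : ∀ X, R X = ∑' x : Ω,
      (if x ∈ A ∧ ∀ m : Fin n, X m ≠ x then (P x).toReal else 0))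
    (hU : ∀ X, U X = ∑' x : Ω,
      (if x ∈ A ∧ ∃! m : Fin n, X m = x then (1 : ℝ) else 0)) :
    -(1 / (n : ℝ)) ≤ (∫ X, (R X - U X / n) ∂μ) ∧ (∫ X, (R X - U X / n) ∂μ) ≤ 0 := by
  subst hμ
  have hn0 : n ≠ 0 := Nat.one_le_iff_ne_zero.mp hn
  have hRU (X : Fin n → Ω) : ∑' x, biasTerm P A x X = R X - U X / n := by
    rw [tsum_biasTerm, hR, hU]
  have hE := hasSum_integral_biasTerm P (A := A) hn0
  simp_rw [hRU] at hE
  refine ⟨hasSum_le (fun x => neg_le_neg ?_) (P.hasSum_toReal.div_const n).neg hE,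
    hasSum_le (fun x => neg_nonpos.2 ?_) hE hasSum_zero⟩
  · exact Set.indicator_apply_le' (fun _ => sq_mul_one_sub_pow_le_div ENNReal.toReal_nonneg
      (P.toReal_apply_le_one x) hn0) (fun _ => by positivity)
  · exact Set.indicator_nonneg (fun x _ => mul_nonneg (sq_nonneg _)
      (pow_nonneg (sub_nonneg.2 (P.toReal_apply_le_one x)) _)) x
end

section
/- The function f(x_1,…,x_n) = R_n - U_n/n (missing mass minus the Good-Turing estimate, viewed as a deterministic function of the sample) satisfies the bounded differences property with constant 2/n + p_max in each coordinate, where p_max = max_x P(x). -/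
/-!
Changing `x_l` to `x'_l` can only change the summands of `R_n` and `U_n` at the two points `x_l`
and `x'_l`. For `R_n`, the point `x_l` is observed in the old sample and `x'_l` in the new one,
so the difference is `P(x'_l)·[x'_l missing before] - P(x_l)·[x_l missing after]`, a difference
of two numbers in `[0, p_max]`. For `U_n`, each of the two singleton indicators moves by at most
`1`, so `U_n / n` moves by at most `2 / n`.
-/

open scoped Classical

open Finset

theorem tsum_sub_tsum_eq_sum_of_eqOn_compl {α G : Type*} [AddCommGroup G] [TopologicalSpace G]
    [IsTopologicalAddGroup G] [T2Space G] {f g : α → G} (hf : Summable f) (hg : Summable g)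
    (s : Finset α) (hfg : ∀ x ∉ s, f x = g x) :
    ∑' x, f x - ∑' x, g x = ∑ x ∈ s, (f x - g x) := by
  rw [← hf.tsum_sub hg]
  exact tsum_eq_sum fun x hx => sub_eq_zero.2 (hfg x hx)

theorem PMF.toReal_le_iSup_toReal {Ω : Type*} (P : PMF Ω) (x : Ω) :
    (P x).toReal ≤ ⨆ y, (P y).toReal := by
  refine le_ciSup (f := fun y => (P y).toReal) ⟨1, ?_⟩ x
  rintro _ ⟨y, rfl⟩
  exact ENNReal.toReal_le_of_le_ofReal zero_le_one (by simpa using P.coe_le_one y)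

theorem PMF.summable_toReal {Ω : Type*} (P : PMF Ω) : Summable fun x => (P x).toReal :=
  ENNReal.summable_toReal (by simp [P.tsum_coe])

namespace GoodTuring

variable {ι Ω : Type*}

noncomputable def missingTerm (P : PMF Ω) (A : Set Ω) (X : ι → Ω) (x : Ω) : ℝ :=
  if x ∈ A ∧ ∀ m, X m ≠ x then (P x).toReal else 0

noncomputable def singletonTerm (A : Set Ω) (X : ι → Ω) (x : Ω) : ℝ :=
  if x ∈ A ∧ ∃! m, X m = x then 1 else 0

noncomputable def missingMass (P : PMF Ω) (A : Set Ω) (X : ι → Ω) : ℝ :=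
  ∑' x, missingTerm P A X x

noncomputable def singletonCount (A : Set Ω) (X : ι → Ω) : ℝ :=
  ∑' x, singletonTerm A X x

section Terms

variable (P : PMF Ω) (A : Set Ω) (X : ι → Ω)

theorem missingTerm_nonneg (x : Ω) : 0 ≤ missingTerm P A X x := by
  unfold missingTerm; split_ifs <;> simp

theorem missingTerm_le_toReal (x : Ω) : missingTerm P A X x ≤ (P x).toReal := by
  unfold missingTerm; split_ifs <;> simp

theorem missingTerm_apply_self (l : ι) : missingTerm P A X (X l) = 0 :=
  if_neg fun h => h.2 l rfl

theorem singletonTerm_nonneg (x : Ω) : 0 ≤ singletonTerm A X x := by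
  unfold singletonTerm; split_ifs <;> simp

theorem singletonTerm_le_one (x : Ω) : singletonTerm A X x ≤ 1 := by
  unfold singletonTerm; split_ifs <;> simp

theorem summable_missingTerm : Summable (missingTerm P A X) :=
  P.summable_toReal.of_nonneg_of_le (missingTerm_nonneg P A X) (missingTerm_le_toReal P A X)

theorem summable_singletonTerm [Finite ι] : Summable (singletonTerm A X) := by
  refine summable_of_hasFiniteSupport ((Set.finite_range X).subset ?_)
  intro x hx
  by_contra hxX
  exact hx (if_neg fun h => hxX (h.2.exists.imp fun m hm => hm))

end Terms

section ChangeOneCoordinate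

variable {X X' : ι → Ω} {l : ι}

theorem apply_eq_iff_of_eqOn_ne (hXX' : ∀ m, m ≠ l → X m = X' m) {x : Ω}
    (hx : x ≠ X l) (hx' : x ≠ X' l) (m : ι) : X m = x ↔ X' m = x := by
  by_cases hm : m = l
  · subst hm
    exact ⟨fun h => absurd h.symm hx, fun h => absurd h.symm hx'⟩
  · rw [hXX' m hm]

theorem missingTerm_eq_of_ne (P : PMF Ω) (A : Set Ω) (hXX' : ∀ m, m ≠ l → X m = X' m) {x : Ω}
    (hx : x ≠ X l) (hx' : x ≠ X' l) : missingTerm P A X x = missingTerm P A X' x := by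
  simp only [missingTerm, ne_eq, apply_eq_iff_of_eqOn_ne hXX' hx hx']

theorem singletonTerm_eq_of_ne (A : Set Ω) (hXX' : ∀ m, m ≠ l → X m = X' m) {x : Ω}
    (hx : x ≠ X l) (hx' : x ≠ X' l) : singletonTerm A X x = singletonTerm A X' x := by
  simp only [singletonTerm, apply_eq_iff_of_eqOn_ne hXX' hx hx']

theorem eq_of_eqOn_ne_of_apply_eq (hXX' : ∀ m, m ≠ l → X m = X' m) (hl : X l = X' l) : X = X' :=
  funext fun m => (eq_or_ne m l).elim (fun hm => hm ▸ hl) (hXX' m)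

theorem abs_missingMass_sub_le (P : PMF Ω) (A : Set Ω) (hXX' : ∀ m, m ≠ l → X m = X' m) :
    |missingMass P A X - missingMass P A X'| ≤ ⨆ x, (P x).toReal := by
  have hle x : (P x).toReal ≤ ⨆ y, (P y).toReal := P.toReal_le_iSup_toReal x
  by_cases hl : X l = X' l
  · rw [eq_of_eqOn_ne_of_apply_eq hXX' hl, sub_self, abs_zero]
    exact ENNReal.toReal_nonneg.trans (hle (X l))
  have hdiff := tsum_sub_tsum_eq_sum_of_eqOn_compl (summable_missingTerm P A X)
    (summable_missingTerm P A X') {X l, X' l} fun x hx => by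
      simp only [mem_insert, mem_singleton, not_or] at hx
      exact missingTerm_eq_of_ne P A hXX' hx.1 hx.2
  -- `X l` is seen in `X` and `X' l` in `X'`, so only one term survives on each side.
  rw [missingMass, missingMass, hdiff, sum_pair hl, missingTerm_apply_self,
    missingTerm_apply_self, zero_sub, sub_zero, neg_add_eq_sub]
  exact abs_sub_le_of_nonneg_of_le (missingTerm_nonneg P A X _)
    ((missingTerm_le_toReal P A X _).trans (hle _)) (missingTerm_nonneg P A X' _)
    ((missingTerm_le_toReal P A X' _).trans (hle _))

theorem abs_singletonCount_sub_le [Finite ι] (A : Set Ω) (hXX' : ∀ m, m ≠ l → X m = X' m) :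
    |singletonCount A X - singletonCount A X'| ≤ 2 := by
  by_cases hl : X l = X' l
  · rw [eq_of_eqOn_ne_of_apply_eq hXX' hl, sub_self, abs_zero]
    exact zero_le_two
  have hdiff := tsum_sub_tsum_eq_sum_of_eqOn_compl (summable_singletonTerm A X)
    (summable_singletonTerm A X') {X l, X' l} fun x hx => by
      simp only [mem_insert, mem_singleton, not_or] at hx
      exact singletonTerm_eq_of_ne A hXX' hx.1 hx.2
  have hterm x : |singletonTerm A X x - singletonTerm A X' x| ≤ 1 :=
    abs_sub_le_of_nonneg_of_le (singletonTerm_nonneg A X x) (singletonTerm_le_one A X x)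
      (singletonTerm_nonneg A X' x) (singletonTerm_le_one A X' x)
  rw [singletonCount, singletonCount, hdiff, sum_pair hl]
  linarith [abs_add_le (singletonTerm A X (X l) - singletonTerm A X' (X l))
    (singletonTerm A X (X' l) - singletonTerm A X' (X' l)), hterm (X l), hterm (X' l)]

end ChangeOneCoordinate

end GoodTuring

open GoodTuring in
theorem goodTuring_bounded_differences_general
    {Ω : Type*} (P : PMF Ω) (A : Set Ω) (n : ℕ)
    (pmax : ℝ) (hpmax : pmax = ⨆ x : Ω, (P x).toReal)
    (f : (Fin n → Ω) → ℝ)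
    (hf : ∀ X, f X =
      (∑' x : Ω, (if x ∈ A ∧ ∀ m : Fin n, X m ≠ x then (P x).toReal else 0)) -
      (∑' x : Ω, (if x ∈ A ∧ ∃! m : Fin n, X m = x then (1 : ℝ) else 0)) / n)
    (X X' : Fin n → Ω) (l : Fin n) (hXX' : ∀ m : Fin n, m ≠ l → X m = X' m) :
    |f X - f X'| ≤ 2 / (n : ℝ) + pmax := by
  have hfY (Y : Fin n → Ω) : f Y = missingMass P A Y - singletonCount A Y / n := by
    rw [hf Y]
    -- the two sides differ only in their `Decidable` instances
    unfold missingMass missingTerm singletonCount singletonTerm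
    congr!
  have hR := abs_missingMass_sub_le P A hXX'
  have hU := abs_singletonCount_sub_le A hXX'
  rw [hfY, hfY, hpmax]
  calc _ = |(missingMass P A X - missingMass P A X') -
          (singletonCount A X - singletonCount A X') / n| := by congr 1; ring
    _ ≤ |missingMass P A X - missingMass P A X'| +
          |(singletonCount A X - singletonCount A X') / n| := abs_sub _ _
    _ = |missingMass P A X - missingMass P A X'| +
          |singletonCount A X - singletonCount A X'| / n := by rw [abs_div, Nat.abs_cast]
    _ ≤ 2 / n + ⨆ x, (P x).toReal := by
        rw [add_comm]
        gcongr

/-- The function `f(x_1,…,x_n) = R_n - U_n/n` (missing mass minus the Good-Turing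
estimate, viewed as a deterministic function of the sample) satisfies the bounded
differences property with constant `2/n + p_max` in each coordinate, where
`p_max = sup_x P(x)`. -/
theorem goodTuring_bounded_differences
    {Ω : Type*} [Countable Ω] (P : PMF Ω) (A : Set Ω) (n : ℕ) (hn : 1 ≤ n)
    (pmax : ℝ) (hpmax : pmax = ⨆ x : Ω, (P x).toReal)
    (f : (Fin n → Ω) → ℝ)
    (hf : ∀ X, f X =
      (∑' x : Ω, (if x ∈ A ∧ ∀ m : Fin n, X m ≠ x then (P x).toReal else 0)) -
      (∑' x : Ω, (if x ∈ A ∧ ∃! m : Fin n, X m = x then (1 : ℝ) else 0)) / n)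
    (X X' : Fin n → Ω) (l : Fin n) (hXX' : ∀ m : Fin n, m ≠ l → X m = X' m) :
    |f X - f X'| ≤ 2 / (n : ℝ) + pmax :=
  goodTuring_bounded_differences_general P A n pmax hpmax f hf X X' l hXX'
end

section
/- Fix q_1 ≥ ⋯ ≥ q_K > 0 and t ≥ 0, and consider minimizing r(ν) = ∑_{i=1}^K q_i·exp(−ν_i) over ν ∈ ℝ^K subject to ν_1+⋯+ν_K = t and ν_i ≥ 0. Then there exists I(t) ∈ {1,…,K} such that the optimum is attained at ν_i* = t/I(t) + log(q_i/\underline{q}_{I(t)}) for i ≤ I(t) and ν_i* = 0 for i > I(t), where \underline{q}_m = (q_1⋯q_m)^{1/m} is the geometric mean; and the optimal value is r*(t) = I(t)·\underline{q}_{I(t)}·exp(−t/I(t)) + ∑_{i>I(t)} q_i. -/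
open Finset Real
open scoped Classical

/-! Writing `q i = exp (log (q i))`, the problem is water-filling: for a level `L` put
`ν i = max (log (q i) - L) 0`. The total `∑ ν i` is continuous in `L`, vanishes at
`L = log q₁` and is at least `t` at `L = log q₁ - t`, so some level spends exactly the budget
`t`. This `ν` satisfies the KKT conditions with multiplier `exp L` (`q i e^{-ν i} = exp L`
where `ν i > 0`, and `q i ≤ exp L` where `ν i = 0`), and the tangent-line bound
`e^{-w} ≥ e^{-ν} (1 + ν - w)` turns them into global optimality. Since `q` is sorted, the
active indices `{i | L ≤ log q i}` form an initial segment `{i < I}`, and solving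
`∑_{i<I} (log q i - L) = t` for `L` gives the closed forms. -/

noncomputable def waterFilling {ι : Type*} (q : ι → ℝ) (L : ℝ) (i : ι) : ℝ :=
  max (log (q i) - L) 0

variable {ι : Type*} {q : ι → ℝ} {L : ℝ}

lemma waterFilling_nonneg (q : ι → ℝ) (L : ℝ) (i : ι) : 0 ≤ waterFilling q L i :=
  le_max_right _ _

lemma waterFilling_of_le_log {i : ι} (h : L ≤ log (q i)) : waterFilling q L i = log (q i) - L :=
  max_eq_left (sub_nonneg.2 h)

lemma waterFilling_of_log_le {i : ι} (h : log (q i) ≤ L) : waterFilling q L i = 0 :=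
  max_eq_right (sub_nonpos.2 h)

lemma mul_exp_neg_waterFilling {i : ι} (hq : 0 < q i) :
    q i * exp (-waterFilling q L i) = min (q i) (exp L) := by
  rcases le_total L (log (q i)) with h | h
  · rw [waterFilling_of_le_log h, min_eq_right ((le_log_iff_exp_le hq).1 h), neg_sub, exp_sub,
      exp_log hq]
    field_simp
  · rw [waterFilling_of_log_le h, min_eq_left ((log_le_iff_le_exp hq).1 h), neg_zero, exp_zero,
      mul_one]

lemma mul_exp_neg_waterFilling_add_le {i : ι} (hq : 0 < q i) {w : ℝ} (hw : 0 ≤ w) :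
    q i * exp (-waterFilling q L i) + exp L * (waterFilling q L i - w) ≤ q i * exp (-w) := by
  set ν := waterFilling q L i
  have htangent : q i * exp (-ν) * (1 + (ν - w)) ≤ q i * exp (-w) :=
    calc q i * exp (-ν) * (1 + (ν - w)) ≤ q i * exp (-ν) * exp (ν - w) := by
          gcongr; linarith [add_one_le_exp (ν - w)]
      _ = q i * exp (-w) := by rw [mul_assoc, ← exp_add]; ring_nf
  have hslack : exp L * (ν - w) ≤ q i * exp (-ν) * (ν - w) := by
    rw [mul_exp_neg_waterFilling hq]
    rcases le_total (exp L) (q i) with h | h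
    · rw [min_eq_right h]
    · have hν : ν = 0 := waterFilling_of_log_le ((log_le_iff_le_exp hq).2 h)
      rw [min_eq_left h, hν, zero_sub]
      nlinarith
  linarith

variable [Fintype ι]

theorem sum_mul_exp_neg_waterFilling_le (hq : ∀ i, 0 < q i) {w : ι → ℝ} (hw : ∀ i, 0 ≤ w i)
    (hsum : ∑ i, w i = ∑ i, waterFilling q L i) :
    ∑ i, q i * exp (-waterFilling q L i) ≤ ∑ i, q i * exp (-w i) :=
  calc ∑ i, q i * exp (-waterFilling q L i)
      = ∑ i, (q i * exp (-waterFilling q L i) + exp L * (waterFilling q L i - w i)) := by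
        rw [sum_add_distrib, ← mul_sum, sum_sub_distrib, hsum, sub_self, mul_zero, add_zero]
    _ ≤ ∑ i, q i * exp (-w i) :=
        sum_le_sum fun i _ => mul_exp_neg_waterFilling_add_le (hq i) (hw i)

lemma continuous_sum_waterFilling (q : ι → ℝ) :
    Continuous fun L => ∑ i, waterFilling q L i := by
  unfold waterFilling
  fun_prop

theorem exists_sum_waterFilling_eq (hq : ∀ i, 0 < q i) {i₀ : ι} (hmax : ∀ i, q i ≤ q i₀)
    {t : ℝ} (ht : 0 ≤ t) : ∃ L ≤ log (q i₀), ∑ i, waterFilling q L i = t := by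
  set M := log (q i₀)
  have hM : ∑ i, waterFilling q M i = 0 :=
    sum_eq_zero fun i _ => waterFilling_of_log_le (log_le_log (hq i) (hmax i))
  have hMt : t ≤ ∑ i, waterFilling q (M - t) i :=
    calc t = waterFilling q (M - t) i₀ := by
          rw [waterFilling_of_le_log (by linarith), sub_sub_cancel]
      _ ≤ ∑ i, waterFilling q (M - t) i :=
          single_le_sum (fun i _ => waterFilling_nonneg q _ i) (mem_univ i₀)
  obtain ⟨L, hL, hLt⟩ := intermediate_value_Icc' (by linarith : M - t ≤ M)
    (continuous_sum_waterFilling q).continuousOn ⟨hM ▸ ht, hMt⟩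
  exact ⟨L, hL.2, hLt⟩

variable {s : Finset ι}

theorem sum_waterFilling_eq (hs : ∀ i, i ∈ s ↔ L ≤ log (q i)) :
    ∑ i, waterFilling q L i = ∑ i ∈ s, log (q i) - #s * L :=
  calc ∑ i, waterFilling q L i = ∑ i ∈ s, waterFilling q L i :=
        (sum_subset (subset_univ s) fun i _ hi =>
          waterFilling_of_log_le (le_of_not_ge (mt (hs i).2 hi))).symm
    _ = ∑ i ∈ s, (log (q i) - L) :=
        sum_congr rfl fun i hi => waterFilling_of_le_log ((hs i).1 hi)
    _ = ∑ i ∈ s, log (q i) - #s * L := by rw [sum_sub_distrib, sum_const, nsmul_eq_mul]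

theorem sum_mul_exp_neg_waterFilling_eq [DecidableEq ι] (hq : ∀ i, 0 < q i)
    (hs : ∀ i, i ∈ s ↔ L ≤ log (q i)) :
    ∑ i, q i * exp (-waterFilling q L i) = #s * exp L + ∑ i ∈ sᶜ, q i := by
  simp_rw [mul_exp_neg_waterFilling (hq _)]
  rw [← sum_add_sum_compl s, sum_congr rfl fun i hi => min_eq_right
      ((le_log_iff_exp_le (hq i)).1 ((hs i).1 hi)),
    sum_congr rfl fun i hi => min_eq_left ((log_le_iff_le_exp (hq i)).1
      (le_of_not_ge (mt (hs i).2 (mem_compl.1 hi)))),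
    sum_const, nsmul_eq_mul]

lemma Fin.exists_forall_lt_iff_of_isLowerSet {n : ℕ} {p : Fin n → Prop} [DecidablePred p]
    (hp : IsLowerSet {i | p i}) : ∃ m ≤ n, ∀ i : Fin n, (i : ℕ) < m ↔ p i := by
  refine ⟨#(univ.filter p), (card_le_univ _).trans_eq (Fintype.card_fin n),
    fun i => ⟨fun hi => ?_, fun hi => ?_⟩⟩
  · by_contra hi'
    have hsub : univ.filter p ⊆ Iio i := fun j hj =>
      mem_Iio.2 (lt_of_not_ge fun h => hi' (hp h ((mem_filter_univ j).1 hj)))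
    have := card_le_card hsub
    rw [Fin.card_Iio] at this
    omega
  · have hsub : Iic i ⊆ univ.filter p := fun j hj =>
      (mem_filter_univ j).2 (hp (mem_Iic.1 hj) hi)
    have := card_le_card hsub
    rw [Fin.card_Iic] at this
    omega

/-- Minimizing `r(ν) = ∑ i q_i e^{−ν_i}` over `ν ≥ 0` with `∑ ν_i = t`: there is an
`I(t) ∈ {1,…,K}` such that the optimum is `ν_i* = t/I(t) + log(q_i/q̲_{I(t)})` for
`i ≤ I(t)` and `ν_i* = 0` for `i > I(t)`, where `q̲_m` is the geometric mean of
`q_1,…,q_m`; the optimal value is `I(t)·q̲_{I(t)}·e^{−t/I(t)} + ∑_{i>I(t)} q_i`. -/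
theorem open_loop_optimal_allocation
    (K : ℕ) (hK : 1 ≤ K) (q : Fin K → ℝ) (hpos : ∀ i, 0 < q i)
    (hsorted : ∀ i j : Fin K, i ≤ j → q j ≤ q i)
    (t : ℝ) (ht : 0 ≤ t)
    (gm : ℕ → ℝ)
    (hgm : ∀ m : ℕ, 1 ≤ m → m ≤ K →
      gm m = Real.exp ((1 / (m : ℝ)) *
        ∑ i ∈ Finset.univ.filter (fun i : Fin K => (i : ℕ) < m), Real.log (q i))) :
    ∃ I : ℕ, 1 ≤ I ∧ I ≤ K ∧
      ∃ ν : Fin K → ℝ,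
        (∀ i : Fin K, ν i =
          if (i : ℕ) < I then t / I + Real.log (q i / gm I) else 0) ∧
        (∀ i, 0 ≤ ν i) ∧ (∑ i, ν i = t) ∧
        (∀ w : Fin K → ℝ, (∀ i, 0 ≤ w i) → (∑ i, w i = t) →
          ∑ i, q i * Real.exp (-ν i) ≤ ∑ i, q i * Real.exp (-w i)) ∧
        ∑ i, q i * Real.exp (-ν i) =
          (I : ℝ) * gm I * Real.exp (-t / I) +
            ∑ i ∈ Finset.univ.filter (fun i : Fin K => I ≤ (i : ℕ)), q i := by
  obtain ⟨L, hL₀, htL⟩ := exists_sum_waterFilling_eq hpos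
    (fun i => hsorted ⟨0, hK⟩ i (Nat.zero_le _)) ht
  obtain ⟨I, hIK, hmem⟩ := Fin.exists_forall_lt_iff_of_isLowerSet (p := fun i => L ≤ log (q i))
    fun i j hji hi => hi.trans (log_le_log (hpos _) (hsorted _ _ hji))
  have hI : 1 ≤ I := (hmem ⟨0, hK⟩).2 hL₀
  set s := univ.filter fun i : Fin K => (i : ℕ) < I
  have hs (i : Fin K) : i ∈ s ↔ L ≤ log (q i) := by simp [s, hmem]
  have hcard : #s = I := by simp [s, Fin.card_filter_val_lt, hIK]
  have hsc : sᶜ = univ.filter fun i : Fin K => I ≤ (i : ℕ) := by ext; simp [s]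
  have hlevel : (I : ℝ) * L = ∑ i ∈ s, log (q i) - t := by
    rw [← htL, sum_waterFilling_eq hs, hcard]; ring
  have hgm_pos : 0 < gm I := by rw [hgm I hI hIK]; positivity
  have hloggm : log (gm I) = (∑ i ∈ s, log (q i)) / I := by
    rw [hgm I hI hIK, log_exp]; ring
  refine ⟨I, hI, hIK, waterFilling q L, fun i => ?_, waterFilling_nonneg q L, htL,
    fun w hw hwt => sum_mul_exp_neg_waterFilling_le hpos hw (hwt.trans htL.symm), ?_⟩
  · split_ifs with hi
    · rw [waterFilling_of_le_log ((hmem i).1 hi), log_div (hpos i).ne' hgm_pos.ne',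
        hloggm]
      field_simp
      linarith
    · exact waterFilling_of_log_le (le_of_not_ge (mt (hmem i).2 hi))
  · have hexpL : exp L = gm I * exp (-t / I) := by
      rw [hgm I hI hIK, ← exp_add]
      congr 1
      field_simp
      linarith
    rw [sum_mul_exp_neg_waterFilling_eq hpos hs, hcard, hsc, hexpL, mul_assoc]
end

section
/- In the two-expert case (K = 2) with q_1 ≥ q_2 > 0, the threshold time after which the optimal open-loop allocation uses both experts is t_1 = log(q_1/q_2): for t ≤ log(q_1/q_2) the minimum of q_1·e^{−ν_1} + q_2·e^{−ν_2} subject to ν_1+ν_2 = t, ν_i ≥ 0 is attained at ν = (t, 0), and for t ≥ log(q_1/q_2) at ν_1 = t/2 + (1/2)log(q_1/q_2), ν_2 = t/2 − (1/2)log(q_1/q_2). -/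
/-!
Along the line `ν₁ + ν₂ = t` the cost `q₁e^{−ν₁} + q₂e^{−ν₂}` is a positive combination of
`e^{s}` and `e^{−s}`. At the balanced point both terms equal the same `A`, and moving by `d`
along the line turns the cost into `2A cosh d ≥ 2A`. The balanced point has `ν₂ ≥ 0` exactly
when `t ≥ log(q₁/q₂)`. Before that, `q₁e^{−t} ≥ q₂`, and shifting `s = ν₂ ≥ 0` away from the
corner `(t, 0)` changes the cost by `(e^{s} − 1)(q₁e^{−t} − q₂e^{−s}) ≥ 0`.
-/

open Real

lemma le_mul_exp_neg_of_le_log {a b t : ℝ} (ha : 0 < a) (hb : 0 < b) (ht : t ≤ log (a / b)) :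
    b ≤ a * exp (-t) := by
  have hexp : exp t ≤ a / b := (le_log_iff_exp_le (div_pos ha hb)).mp ht
  rw [exp_neg, ← div_eq_mul_inv, le_div_iff₀ (exp_pos t)]
  rwa [le_div_iff₀ hb, mul_comm] at hexp

lemma add_le_mul_exp_add_mul_exp_neg {a b s : ℝ} (hb : 0 ≤ b) (hba : b ≤ a) (hs : 0 ≤ s) :
    a + b ≤ a * exp s + b * exp (-s) := by
  have hexp : 1 ≤ exp s := one_le_exp hs
  have hexp_neg : b * exp (-s) ≤ b :=
    mul_le_of_le_one_right hb (exp_le_one_iff.mpr (neg_nonpos.mpr hs))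
  have hfactor : a * exp s + b * exp (-s) - (a + b) = (exp s - 1) * (a - b * exp (-s)) := by
    rw [exp_neg]; field_simp; ring
  nlinarith [mul_nonneg (sub_nonneg.mpr hexp) (sub_nonneg.mpr (hexp_neg.trans hba))]

lemma mul_exp_neg_add_mul_exp_neg_le_of_balanced {a b μ₁ μ₂ ν₁ ν₂ : ℝ}
    (hA : 0 ≤ a * exp (-μ₁)) (hbal : a * exp (-μ₁) = b * exp (-μ₂))
    (hsum : ν₁ + ν₂ = μ₁ + μ₂) :
    a * exp (-μ₁) + b * exp (-μ₂) ≤ a * exp (-ν₁) + b * exp (-ν₂) := by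
  set A := a * exp (-μ₁)
  set d := ν₁ - μ₁
  have h₁ : a * exp (-ν₁) = A * exp (-d) := by
    rw [mul_assoc, ← exp_add, show -μ₁ + -d = -ν₁ by ring]
  have h₂ : b * exp (-ν₂) = A * exp d := by
    rw [hbal, mul_assoc, ← exp_add, show -μ₂ + d = -ν₂ by linarith]
  have hcosh : A * exp d + A * exp (-d) = 2 * A * cosh d := by rw [cosh_eq]; ring
  rw [h₁, h₂, ← hbal, add_comm (A * exp (-d)), hcosh]
  nlinarith [one_le_cosh d]

theorem two_expert_threshold_general
    (q1 q2 : ℝ) (h2 : 0 < q2) (h12 : q2 ≤ q1) (t : ℝ) :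
    (t ≤ Real.log (q1 / q2) →
      ∀ ν1 ν2 : ℝ, 0 ≤ ν1 → 0 ≤ ν2 → ν1 + ν2 = t →
        q1 * Real.exp (-t) + q2 * Real.exp (-(0 : ℝ)) ≤
          q1 * Real.exp (-ν1) + q2 * Real.exp (-ν2)) ∧
    (Real.log (q1 / q2) ≤ t →
      ∀ ν1 ν2 : ℝ, 0 ≤ ν1 → 0 ≤ ν2 → ν1 + ν2 = t →
        q1 * Real.exp (-(t / 2 + Real.log (q1 / q2) / 2)) +
          q2 * Real.exp (-(t / 2 - Real.log (q1 / q2) / 2)) ≤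
          q1 * Real.exp (-ν1) + q2 * Real.exp (-ν2)) := by
  have h1 : 0 < q1 := h2.trans_le h12
  refine ⟨fun hle ν1 ν2 _ hν2 hsum => ?_, fun _ ν1 ν2 _ _ hsum => ?_⟩
  · have hcorner := add_le_mul_exp_add_mul_exp_neg h2.le (le_mul_exp_neg_of_le_log h1 h2 hle) hν2
    have hν1 : q1 * exp (-ν1) = q1 * exp (-t) * exp ν2 := by
      rw [mul_assoc, ← exp_add, ← hsum]; ring_nf
    rwa [neg_zero, exp_zero, mul_one, hν1]
  · set L := log (q1 / q2)
    have hbal : q1 * exp (-(t / 2 + L / 2)) = q2 * exp (-(t / 2 - L / 2)) := by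
      have hq1 : q1 = q2 * exp L := by rw [exp_log (div_pos h1 h2)]; field_simp
      rw [hq1, mul_assoc, ← exp_add]; ring_nf
    exact mul_exp_neg_add_mul_exp_neg_le_of_balanced (by positivity) hbal (by linarith)

/-- Two-expert case: the threshold time after which the optimal open-loop allocation
uses both experts is `t₁ = log(q₁/q₂)`.  For `t ≤ log(q₁/q₂)` the minimum of
`q₁e^{−ν₁} + q₂e^{−ν₂}` over `ν₁+ν₂ = t`, `ν ≥ 0` is attained at `(t,0)`; for
`t ≥ log(q₁/q₂)` it is attained at `(t/2 + ½log(q₁/q₂), t/2 − ½log(q₁/q₂))`. -/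
theorem two_expert_threshold
    (q1 q2 : ℝ) (h2 : 0 < q2) (h12 : q2 ≤ q1) (t : ℝ) (ht : 0 ≤ t) :
    (t ≤ Real.log (q1 / q2) →
      ∀ ν1 ν2 : ℝ, 0 ≤ ν1 → 0 ≤ ν2 → ν1 + ν2 = t →
        q1 * Real.exp (-t) + q2 * Real.exp (-(0 : ℝ)) ≤
          q1 * Real.exp (-ν1) + q2 * Real.exp (-ν2)) ∧
    (Real.log (q1 / q2) ≤ t →
      ∀ ν1 ν2 : ℝ, 0 ≤ ν1 → 0 ≤ ν2 → ν1 + ν2 = t →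
        q1 * Real.exp (-(t / 2 + Real.log (q1 / q2) / 2)) +
          q2 * Real.exp (-(t / 2 - Real.log (q1 / q2) / 2)) ≤
          q1 * Real.exp (-ν1) + q2 * Real.exp (-ν2)) :=
  two_expert_threshold_general q1 q2 h2 h12 t
end
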